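/- Let C be a commutative unital ring, G a semigroup with zero, R a C-algebra, and t : \overline{CG} → R a C-linear trace. Then t is minimal if and only if for all g₁,…,gₙ ∈ G such that no gᵢ satisfies gᵢ ~ 0 and gᵢ ≁ gⱼ for i ≠ j, the elements t(π(1·g₁)),…,t(π(1·gₙ)) are C-linearly independent in R (where π : CG → \overline{CG} is the quotient map and 1·g is the indicator function of g). -/

import Mathlib

/-- The one-step relation: `x = a*b` and `y = b*a`. -/
def simStep {G : Type*} [Mul G] (x y : G) : Prop := ∃ a b : G, x = a * b ∧ y = b * a

/-- The relation `~` on a semigroup: the reflexive-transitive closure of `simStep`. -/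
def sim {G : Type*} [Mul G] : G → G → Prop := Relation.ReflTransGen simStep

theorem sim_equiv {G : Type*} [Mul G] : Equivalence (sim (G := G)) :=
  ⟨fun _ => Relation.ReflTransGen.refl,
   fun h => by
      have : Std.Symm (simStep (G := G)) := ⟨fun _ _ ⟨a, b, h1, h2⟩ => ⟨b, a, h2, h1⟩⟩
      exact (Relation.ReflTransGen.stdSymm (r := simStep (G := G))).symm _ _ h,
   fun h1 h2 => Relation.ReflTransGen.trans h1 h2⟩

/-- The setoid on `G` given by `~`. -/
def simSetoid (G : Type*) [Mul G] : Setoid G := ⟨sim, sim_equiv⟩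

/-- The additive subgroup `[A,A]` generated by commutators. -/
def commutatorSubgroup (A : Type*) [NonUnitalNonAssocRing A] : AddSubgroup A :=
  AddSubgroup.closure {x | ∃ a b : A, x = a * b - b * a}

/-- The ideal `I₀` of the semigroup ring `CG` consisting of functions supported in `{0}`. -/
noncomputable def I0 (C G : Type*) [CommRing C] [SemigroupWithZero G] :
    TwoSidedIdeal (MonoidAlgebra C G) :=
  TwoSidedIdeal.mk' {f : MonoidAlgebra C G | ∀ g : G, g ≠ 0 → f.coeff g = 0}
    (fun _ _ => rfl)
    (fun {x y} hx hy g hg => by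
      show (x + y).coeff g = 0
      rw [MonoidAlgebra.coeff_add, Finsupp.add_apply, hx g hg, hy g hg, add_zero])
    (fun {x} hx g hg => by
      show (-x).coeff g = 0
      rw [MonoidAlgebra.coeff_neg, Finsupp.neg_apply, hx g hg, neg_zero])
    (fun {x y} hy g hg => by
      classical
      rw [MonoidAlgebra.coeff_mul]
      rw [Finsupp.sum]
      refine Finset.sum_eq_zero fun a _ => ?_
      rw [Finsupp.sum]
      refine Finset.sum_eq_zero fun b hb => ?_
      have hb0 : b = 0 := by
        by_contra h
        exact Finsupp.mem_support_iff.mp hb (hy b h)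
      subst hb0
      rw [mul_zero, if_neg fun h => hg h.symm])
    (fun {x y} hx g hg => by
      classical
      rw [MonoidAlgebra.coeff_mul]
      rw [Finsupp.sum]
      refine Finset.sum_eq_zero fun a ha => ?_
      rw [Finsupp.sum]
      refine Finset.sum_eq_zero fun b _ => ?_
      have ha0 : a = 0 := by
        by_contra h
        exact Finsupp.mem_support_iff.mp ha (hx a h)
      subst ha0
      rw [zero_mul, if_neg fun h => hg h.symm])

/-- The contracted semigroup ring `\overline{CG} = CG / I₀`. -/
abbrev ContractedSemigroupRing (C G : Type*) [CommRing C] [SemigroupWithZero G] :=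
  (I0 C G).ringCon.Quotient

/-- The quotient map `π : CG → \overline{CG}`. -/
noncomputable def toCSR (C G : Type*) [CommRing C] [SemigroupWithZero G]
    (f : MonoidAlgebra C G) : ContractedSemigroupRing C G := f

/-- The map `f ↦ ∑_g f(g) • δ(g)` from `CG` to `R`. -/
def elemSum (C : Type*) {G R : Type*} [CommRing C] [SemigroupWithZero G]
    [AddCommMonoid R] [Module C R] (δ : G → R) (f : MonoidAlgebra C G) : R :=
  f.coeff.sum fun g c => c • δ g


/-!
For every `~`-class `κ` not containing `0`, summing the coefficients over `κ` is a `C`-linear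
functional on `CG` that kills `I₀` and all commutators (because `ab ~ ba`), so it factors through
`\overline{CG} / [\overline{CG}, \overline{CG}]`. Conversely, modulo commutators `1·h` is
congruent to `1·g` whenever `h ~ g`, and to `0` when `h ~ 0`; hence every element of
`\overline{CG}` is congruent to `∑ κ (class sum over κ) · g_κ` for representatives `g_κ` of the
classes meeting its support. So `\overline{CG} / [\overline{CG}, \overline{CG}]` is free on the
classes not containing `0`, and a trace is minimal exactly when it is injective on this quotient,
i.e. when it maps distinct representatives to linearly independent elements.
-/

open MonoidAlgebra

theorem sim_mul_comm {G : Type*} [Mul G] (a b : G) : sim (a * b) (b * a) :=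
  Relation.ReflTransGen.single ⟨a, b, rfl, rfl⟩

theorem Setoid.exists_fin_transversal {α : Type*} (r : Setoid α) (s : Finset α) :
    ∃ (n : ℕ) (g : Fin n → α), (∀ i, ∃ a ∈ s, r (g i) a) ∧
      (∀ i j, i ≠ j → ¬ r (g i) (g j)) ∧ ∀ a ∈ s, ∃ i, r a (g i) := by
  classical
  let S := s.image (Quotient.mk r)
  let g : Fin S.card → α := fun i => (S.equivFin.symm i).1.out
  have hg : ∀ i, Quotient.mk r (g i) = S.equivFin.symm i := fun i => Quotient.out_eq _
  refine ⟨S.card, g, fun i => ?_, fun i j hij hr => ?_, fun a ha => ?_⟩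
  · obtain ⟨a, ha, hq⟩ := Finset.mem_image.mp (S.equivFin.symm i).2
    exact ⟨a, ha, Quotient.exact ((hg i).trans hq.symm)⟩
  · refine hij (S.equivFin.symm.injective (Subtype.ext ?_))
    rw [← hg, ← hg, Quotient.sound hr]
  · refine ⟨S.equivFin ⟨_, Finset.mem_image_of_mem _ ha⟩, Quotient.exact ?_⟩
    rw [hg, Equiv.symm_apply_apply]

theorem commutatorSubgroup_le_ker {A M : Type*} [NonUnitalNonAssocRing A] [AddCommGroup M]
    (t : A →+ M) (ht : ∀ x y, t (x * y) = t (y * x)) : commutatorSubgroup A ≤ t.ker := by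
  rw [commutatorSubgroup, AddSubgroup.closure_le]
  rintro _ ⟨a, b, rfl⟩
  simp [ht]

theorem commutatorSubgroup_le_map {A B F : Type*} [NonUnitalNonAssocRing A]
    [NonUnitalNonAssocRing B] [FunLike F A B] [NonUnitalRingHomClass F A B] {φ : F}
    (hφ : Function.Surjective φ) :
    commutatorSubgroup B ≤ (commutatorSubgroup A).map (φ : A →+ B) := by
  rw [commutatorSubgroup, AddSubgroup.closure_le]
  rintro _ ⟨u, v, rfl⟩
  obtain ⟨a, rfl⟩ := hφ u
  obtain ⟨b, rfl⟩ := hφ v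
  exact ⟨a * b - b * a, AddSubgroup.subset_closure ⟨a, b, rfl⟩, by simp⟩

theorem exists_fin_transversal_sim {G : Type*} [SemigroupWithZero G] (s : Finset G) :
    ∃ (n : ℕ) (g : Fin n → G), (∀ i, ¬ sim (g i) 0) ∧ (∀ i j, i ≠ j → ¬ sim (g i) (g j)) ∧
      ∀ h ∈ s, ¬ sim h 0 → ∃ i, sim h (g i) := by
  classical
  obtain ⟨n, g, hmem, hg, hcover⟩ :=
    (simSetoid G).exists_fin_transversal (s.filter fun h => ¬ sim h 0)
  refine ⟨n, g, fun i h0 => ?_, hg, fun h hh h0 => hcover h (by simp [hh, h0])⟩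
  obtain ⟨a, ha, hga⟩ := hmem i
  exact (Finset.mem_filter.mp ha).2 (sim_equiv.trans (sim_equiv.symm hga) h0)

namespace ContractedSemigroupRing

variable {C G : Type*} [CommRing C] [SemigroupWithZero G]

variable (C G) in
noncomputable def toCSRHom : MonoidAlgebra C G →ₙ+* ContractedSemigroupRing C G where
  toFun := toCSR C G
  map_zero' := rfl
  map_add' _ _ := rfl
  map_mul' _ _ := rfl

theorem coe_toCSRHom : ⇑(toCSRHom C G) = toCSR C G := rfl

theorem toCSRHom_surjective : Function.Surjective (toCSRHom C G) := Quotient.mk''_surjective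

theorem mem_I0 {f : MonoidAlgebra C G} : f ∈ I0 C G ↔ ∀ g, g ≠ 0 → f.coeff g = 0 :=
  TwoSidedIdeal.mem_mk' _ _ _ _ _ _ _

theorem eq_single_zero_of_mem_I0 {f : MonoidAlgebra C G} (hf : f ∈ I0 C G) :
    f = single 0 (f.coeff 0) := by
  ext g
  by_cases hg : g = 0
  · simp [hg]
  · simp [mem_I0.mp hf g hg, Ne.symm hg]

theorem toCSR_eq_toCSR_iff {f f' : MonoidAlgebra C G} :
    toCSR C G f = toCSR C G f' ↔ f - f' ∈ I0 C G :=
  (RingCon.eq _).trans (TwoSidedIdeal.rel_iff _ _ _)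

theorem toCSR_single_zero (c : C) : toCSR C G (single 0 c) = 0 := by
  change toCSR C G (single 0 c) = toCSR C G 0
  rw [toCSR_eq_toCSR_iff, sub_zero, mem_I0]
  intro g hg
  simp [Ne.symm hg]

theorem toCSR_single_sub_mem_of_sim {g h : G} (hs : sim g h) (c : C) :
    toCSR C G (single g c) - toCSR C G (single h c) ∈
      commutatorSubgroup (ContractedSemigroupRing C G) := by
  induction hs with
  | refl => simp [zero_mem]
  | tail _ step ih =>
    obtain ⟨a, b, rfl, rfl⟩ := step
    have hab : toCSR C G (single (a * b) c) - toCSR C G (single (b * a) c) ∈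
        commutatorSubgroup (ContractedSemigroupRing C G) :=
      AddSubgroup.subset_closure ⟨toCSR C G (single a c), toCSR C G (single b 1), by
        simp [← coe_toCSRHom, ← map_mul, single_mul_single]⟩
    simpa using add_mem ih hab

theorem toCSR_mem_of_sim_zero {h : G} (hs : sim h 0) (c : C) :
    toCSR C G (single h c) ∈ commutatorSubgroup (ContractedSemigroupRing C G) := by
  simpa [toCSR_single_zero] using toCSR_single_sub_mem_of_sim hs c

theorem trace_toCSR_sum_single {R ι : Type*} [AddCommGroup R] [Module C R] [Fintype ι]
    (t : ContractedSemigroupRing C G →+ R)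
    (hlin : ∀ (c : C) (f : MonoidAlgebra C G), t (toCSR C G (c • f)) = c • t (toCSR C G f))
    (g : ι → G) (c : ι → C) :
    t (toCSR C G (∑ i, single (g i) (c i))) = ∑ i, c i • t (toCSR C G (single (g i) 1)) := by
  rw [← coe_toCSRHom, map_sum, map_sum]
  refine Finset.sum_congr rfl fun i _ => ?_
  rw [coe_toCSRHom, ← hlin, smul_single', mul_one]

open Classical in
noncomputable def classSum (g : G) : MonoidAlgebra C G →+ C :=
  (Finsupp.liftAddHom fun h => if sim h g then AddMonoidHom.id C else 0).comp
    coeffAddEquiv.toAddMonoidHom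

open Classical in
theorem classSum_single (g h : G) (c : C) :
    classSum g (single h c) = if sim h g then c else 0 := by
  by_cases hs : sim h g <;> simp [classSum, hs]

theorem classSum_mul_comm (g : G) (a b : MonoidAlgebra C G) :
    classSum g (a * b) = classSum g (b * a) := by
  classical
  induction a using MonoidAlgebra.induction_linear with
  | zero => simp
  | add a a' ha ha' => simp only [add_mul, mul_add, map_add, ha, ha']
  | single x c =>
    induction b using MonoidAlgebra.induction_linear with
    | zero => simp
    | add b b' hb hb' => simp only [add_mul, mul_add, map_add, hb, hb']
    | single y d =>
      have hxy : sim (x * y) g ↔ sim (y * x) g :=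
        ⟨sim_equiv.trans (sim_mul_comm y x), sim_equiv.trans (sim_mul_comm x y)⟩
      simp only [single_mul_single, classSum_single, mul_comm c d]
      exact if_congr hxy rfl rfl

theorem classSum_eq_zero_of_mem_I0 {g : G} (hg : ¬ sim g 0) {f : MonoidAlgebra C G}
    (hf : f ∈ I0 C G) : classSum g f = 0 := by
  rw [eq_single_zero_of_mem_I0 hf, classSum_single, if_neg (fun h => hg (sim_equiv.symm h))]

theorem classSum_eq_zero_of_toCSR_mem {g : G} (hg : ¬ sim g 0) {f : MonoidAlgebra C G}
    (hf : toCSR C G f ∈ commutatorSubgroup (ContractedSemigroupRing C G)) :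
    classSum g f = 0 := by
  obtain ⟨k, hk, hkf⟩ := commutatorSubgroup_le_map toCSRHom_surjective hf
  have hfk : f - k ∈ I0 C G := toCSR_eq_toCSR_iff.mp hkf.symm
  rw [← sub_add_cancel f k, map_add, classSum_eq_zero_of_mem_I0 hg hfk,
    commutatorSubgroup_le_ker _ (classSum_mul_comm g) hk, add_zero]

theorem classSum_sum_single {ι : Type*} [Fintype ι] {g : ι → G}
    (hg : ∀ i j, i ≠ j → ¬ sim (g i) (g j)) (c : ι → C) (i : ι) :
    classSum (g i) (∑ j, single (g j) (c j)) = c i := by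
  rw [map_sum, Finset.sum_eq_single i (fun j _ hj => by rw [classSum_single, if_neg (hg j i hj)])
    (by simp), classSum_single, if_pos (sim_equiv.refl _)]

section Decomposition

variable {ι : Type*} [Fintype ι] {g : ι → G}

theorem toCSR_single_sub_sum_classSum_mem (hg0 : ∀ i, ¬ sim (g i) 0)
    (hg : ∀ i j, i ≠ j → ¬ sim (g i) (g j)) {h : G} (hh : sim h 0 ∨ ∃ i, sim h (g i)) (c : C) :
    toCSR C G (single h c - ∑ i, single (g i) (classSum (g i) (single h c))) ∈
      commutatorSubgroup (ContractedSemigroupRing C G) := by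
  rcases hh with h0 | ⟨i, hi⟩
  · have hzero : ∀ i, classSum (g i) (single h c) = 0 := fun i => by
      rw [classSum_single, if_neg fun hi => hg0 i (sim_equiv.trans (sim_equiv.symm hi) h0)]
    simpa [hzero] using toCSR_mem_of_sim_zero h0 c
  · have hsum : ∑ j, single (g j) (classSum (g j) (single h c)) = single (g i) c := by
      rw [Finset.sum_eq_single i (fun j _ hj => ?_) (by simp), classSum_single, if_pos hi]
      rw [classSum_single, single_eq_zero, if_neg]
      exact fun hj' => hg i j (Ne.symm hj) (sim_equiv.trans (sim_equiv.symm hi) hj')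
    rw [hsum, ← coe_toCSRHom, map_sub]
    exact toCSR_single_sub_mem_of_sim hi c

theorem toCSR_sub_sum_classSum_mem (hg0 : ∀ i, ¬ sim (g i) 0)
    (hg : ∀ i j, i ≠ j → ¬ sim (g i) (g j)) {f : MonoidAlgebra C G}
    (hcover : ∀ h ∈ f.coeff.support, ¬ sim h 0 → ∃ i, sim h (g i)) :
    toCSR C G (f - ∑ i, single (g i) (classSum (g i) f)) ∈
      commutatorSubgroup (ContractedSemigroupRing C G) := by
  let D : MonoidAlgebra C G →+ ContractedSemigroupRing C G :=
    (toCSRHom C G : MonoidAlgebra C G →+ _) - ∑ i,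
      (toCSRHom C G : MonoidAlgebra C G →+ _).comp ((singleAddHom (g i)).comp (classSum (g i)))
  have hD : ∀ x, D x = toCSR C G (x - ∑ i, single (g i) (classSum (g i) x)) := fun x => by
    simp [D, ← coe_toCSRHom, map_sub, map_sum]
  rw [← hD, ← sum_coeff_single f, map_finsuppSum]
  refine AddSubgroup.sum_mem _ fun h hh => ?_
  beta_reduce
  rw [hD]
  exact toCSR_single_sub_sum_classSum_mem hg0 hg (or_iff_not_imp_left.mpr (hcover h hh)) _

end Decomposition

end ContractedSemigroupRing

open ContractedSemigroupRing

theorem semigroupRing_trace_minimal_iff_general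
    {C G R : Type*} [CommRing C] [SemigroupWithZero G]
    [NonUnitalRing R] [Module C R]
    (t : ContractedSemigroupRing C G → R)
    (hadd : ∀ x y : ContractedSemigroupRing C G, t (x + y) = t x + t y)
    (htrace : ∀ x y : ContractedSemigroupRing C G, t (x * y) = t (y * x))
    (hlin : ∀ (c : C) (f : MonoidAlgebra C G),
      t (toCSR C G (c • f)) = c • t (toCSR C G f)) :
    (∀ x : ContractedSemigroupRing C G, t x = 0 →
        x ∈ commutatorSubgroup (ContractedSemigroupRing C G)) ↔
      ∀ (n : ℕ) (g : Fin n → G),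
        (∀ i, ¬ sim (g i) 0) →
        (∀ i j, i ≠ j → ¬ sim (g i) (g j)) →
        ∀ c : Fin n → C,
          (∑ i, c i • t (toCSR C G (MonoidAlgebra.single (g i) 1))) = 0 →
          ∀ i, c i = 0 := by
  let τ : ContractedSemigroupRing C G →+ R := AddMonoidHom.mk' t hadd
  have hτ : commutatorSubgroup (ContractedSemigroupRing C G) ≤ τ.ker :=
    commutatorSubgroup_le_ker τ htrace
  constructor
  · intro hmin n g hg0 hg c hc i
    have hf : t (toCSR C G (∑ j, single (g j) (c j))) = 0 :=
      (trace_toCSR_sum_single τ hlin g c).trans hc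
    rw [← classSum_sum_single hg c i]
    exact classSum_eq_zero_of_toCSR_mem (hg0 i) (hmin _ hf)
  · intro hind x hx
    obtain ⟨f, rfl⟩ := toCSRHom_surjective x
    rw [coe_toCSRHom] at hx ⊢
    obtain ⟨n, g, hg0, hg, hcover⟩ := exists_fin_transversal_sim f.coeff.support
    have hdec := toCSR_sub_sum_classSum_mem hg0 hg hcover
    have hproj : t (toCSR C G (∑ i, single (g i) (classSum (g i) f))) = 0 := by
      have h := hτ hdec
      rw [AddMonoidHom.mem_ker, ← coe_toCSRHom, map_sub, map_sub, coe_toCSRHom, sub_eq_zero] at h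
      exact h.symm.trans hx
    have hzero := hind n g hg0 hg _ ((trace_toCSR_sum_single τ hlin g _).symm.trans hproj)
    simpa [hzero] using hdec

/-- A `C`-linear trace `t : \overline{CG} → R` is minimal if and only if
for all `g₁, …, gₙ ∈ G` with no `gᵢ ~ 0` and `gᵢ ≁ gⱼ` for `i ≠ j`, the elements
`t(π(1·g₁)), …, t(π(1·gₙ))` are `C`-linearly independent in `R`. -/
theorem semigroupRing_trace_minimal_iff
    {C G R : Type*} [CommRing C] [SemigroupWithZero G]
    [NonUnitalRing R] [Module C R] [SMulCommClass C R R] [IsScalarTower C R R]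
    (t : ContractedSemigroupRing C G → R)
    (hadd : ∀ x y : ContractedSemigroupRing C G, t (x + y) = t x + t y)
    (htrace : ∀ x y : ContractedSemigroupRing C G, t (x * y) = t (y * x))
    (hlin : ∀ (c : C) (f : MonoidAlgebra C G),
      t (toCSR C G (c • f)) = c • t (toCSR C G f)) :
    (∀ x : ContractedSemigroupRing C G, t x = 0 →
        x ∈ commutatorSubgroup (ContractedSemigroupRing C G)) ↔
      ∀ (n : ℕ) (g : Fin n → G),
        (∀ i, ¬ sim (g i) 0) →
        (∀ i j, i ≠ j → ¬ sim (g i) (g j)) →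
        ∀ c : Fin n → C,
          (∑ i, c i • t (toCSR C G (MonoidAlgebra.single (g i) 1))) = 0 →
          ∀ i, c i = 0 :=
  semigroupRing_trace_minimal_iff_general t hadd htrace hlin
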